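/- Consider the system over Z/4Z indexed by k ∈ Z/(2b−1)Z (b ≥ 1): 2x_{k−1} = x_k + y_k, 2y_k = x_{k−1} + y_{k−1}, 2x_k = x_{k+1} + y_{k+1}, 2y_{k+1} = x_k + y_k. Every solution satisfies x_k = y_k for all k, and all x_k share the same parity; conversely every tuple with x_k = y_k and all x_k of equal parity is a solution. Hence the number of solutions is 2 · 2^{2b−1} = 4^b. -/
import Mathlib

/-- Encoding of an element of `ZMod 4` by its parity bit and high bit. -/
def chainE (p q : ZMod 2) : ZMod 4 := ((p.val + 2 * q.val : ℕ) : ZMod 4)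

lemma chainE_parity : ∀ p q : ZMod 2, (chainE p q).val % 2 = p.val := by decide

lemma chainE_inj : ∀ p q p' q' : ZMod 2, chainE p q = chainE p' q' → p = p' ∧ q = q' := by
  decide

lemma chainE_surj : ∀ a c : ZMod 4, a.val % 2 = c.val % 2 →
    chainE ((c.val : ZMod 2)) (((a.val / 2 : ℕ) : ZMod 2)) = a := by decide

lemma zmod4_four_mul (a : ZMod 4) : 4 * a = 0 := by
  have : (4 : ZMod 4) = 0 := by decide
  rw [this, zero_mul]

lemma zmod4_parity_of_two_mul : ∀ a c : ZMod 4, 2 * a = 2 * c → a.val % 2 = c.val % 2 := by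
  decide

lemma zmod4_two_mul_of_parity : ∀ a c : ZMod 4, a.val % 2 = c.val % 2 → 2 * a = 2 * c := by
  decide

/-- Coloring equations of the (2b−1)-component chain link over ℤ/4ℤ: solutions are
exactly the tuples with x_k = y_k and all coordinates of equal parity, and there are
4^b of them. -/
theorem chain_link_colorings (b : ℕ) (hb : 1 ≤ b) :
    (∀ x y : ZMod (2 * b - 1) → ZMod 4,
      (∀ k, 2 * x (k - 1) = x k + y k ∧ 2 * y k = x (k - 1) + y (k - 1) ∧
            2 * x k = x (k + 1) + y (k + 1) ∧ 2 * y (k + 1) = x k + y k) ↔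
      ((∀ k, x k = y k) ∧ ∀ j k, (x j).val % 2 = (x k).val % 2)) ∧
    Nat.card {xy : (ZMod (2 * b - 1) → ZMod 4) × (ZMod (2 * b - 1) → ZMod 4) //
      ∀ k, 2 * xy.1 (k - 1) = xy.1 k + xy.2 k ∧
           2 * xy.2 k = xy.1 (k - 1) + xy.2 (k - 1) ∧
           2 * xy.1 k = xy.1 (k + 1) + xy.2 (k + 1) ∧
           2 * xy.2 (k + 1) = xy.1 k + xy.2 k} = 4 ^ b := by
  haveI : NeZero (2 * b - 1) := ⟨by omega⟩
  -- Part 1: the characterization of solutions.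
  have hiff : ∀ x y : ZMod (2 * b - 1) → ZMod 4,
      (∀ k, 2 * x (k - 1) = x k + y k ∧ 2 * y k = x (k - 1) + y (k - 1) ∧
            2 * x k = x (k + 1) + y (k + 1) ∧ 2 * y (k + 1) = x k + y k) ↔
      ((∀ k, x k = y k) ∧ ∀ j k, (x j).val % 2 = (x k).val % 2) := by
    intro x y
    constructor
    · intro h
      -- step: s(k+2) = s(k) where s k = x k + y k
      have hstep : ∀ k, x (k + 1 + 1) + y (k + 1 + 1) = x k + y k := by
        intro k
        have h3 := (h k).2.2.1
        have h4 := (h k).2.2.2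
        have h1' := (h (k + 1)).2.2.1
        have hz := zmod4_four_mul (x k)
        have hz2 := zmod4_four_mul (y (k + 1))
        linear_combination -h1' + h4 - 2 * h3 + hz - hz2
      -- s is constant along even steps, hence constant (n odd)
      have key : ∀ (m : ℕ) (k : ZMod (2 * b - 1)),
          x (k + (2 * m : ℕ)) + y (k + (2 * m : ℕ)) = x k + y k := by
        intro m
        induction m with
        | zero => intro k; simp
        | succ m ih =>
          intro k
          have e : (k + (2 * (m + 1) : ℕ) : ZMod (2 * b - 1))
              = (k + (2 * m : ℕ)) + 1 + 1 := by push_cast; ring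
          rw [e, hstep (k + (2 * m : ℕ)), ih k]
      have hconst : ∀ j k : ZMod (2 * b - 1), x j + y j = x k + y k := by
        intro j k
        have hunit : IsUnit (2 : ZMod (2 * b - 1)) := by
          have h2 : ((2 : ℕ) : ZMod (2 * b - 1)) = (2 : ZMod (2 * b - 1)) := by push_cast; ring
          rw [← h2]
          rw [ZMod.isUnit_iff_coprime]
          have : Odd (2 * b - 1) := ⟨b - 1, by omega⟩
          rcases this with ⟨c, hc⟩
          simp [Nat.Coprime, hc]
        set u : ZMod (2 * b - 1) := (2 : ZMod (2 * b - 1))⁻¹ * (j - k) with hu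
        have h2u : 2 * u = j - k := by
          rw [hu, ← mul_assoc, ZMod.mul_inv_of_unit _ hunit, one_mul]
        have hcast : (k + (2 * u.val : ℕ) : ZMod (2 * b - 1)) = j := by
          push_cast
          rw [ZMod.natCast_rightInverse u, h2u]
          ring
        have := key u.val k
        rw [hcast] at this
        exact this
      have hxy : ∀ k, x k = y k := by
        intro k
        have h3 := (h k).2.2.1
        have hc := hconst (k + 1) k
        linear_combination h3 + hc
      refine ⟨hxy, fun j k => ?_⟩
      apply zmod4_parity_of_two_mul
      have h3j := (h j).2.2.1
      have h3k := (h k).2.2.1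
      have hc := hconst (j + 1) (k + 1)
      linear_combination h3j - h3k + hc
    · rintro ⟨hxy, hpar⟩ k
      have e : ∀ j l : ZMod (2 * b - 1), 2 * x j = x l + y l := by
        intro j l
        rw [← hxy l, ← two_mul]
        exact zmod4_two_mul_of_parity _ _ (hpar j l)
      have e' : ∀ j l : ZMod (2 * b - 1), 2 * y j = x l + y l := by
        intro j l
        rw [← hxy j]; exact e j l
      exact ⟨e (k - 1) k, e' k (k - 1), e k (k + 1), e' (k + 1) k⟩
  refine ⟨hiff, ?_⟩
  -- Part 2: counting.
  set T := {xy : (ZMod (2 * b - 1) → ZMod 4) × (ZMod (2 * b - 1) → ZMod 4) //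
      ∀ k, 2 * xy.1 (k - 1) = xy.1 k + xy.2 k ∧
           2 * xy.2 k = xy.1 (k - 1) + xy.2 (k - 1) ∧
           2 * xy.1 k = xy.1 (k + 1) + xy.2 (k + 1) ∧
           2 * xy.2 (k + 1) = xy.1 k + xy.2 k} with hT
  have memF : ∀ (p : ZMod 2) (g : ZMod (2 * b - 1) → ZMod 2),
      ∀ k, 2 * (fun k => chainE p (g k)) (k - 1)
            = (fun k => chainE p (g k)) k + (fun k => chainE p (g k)) k ∧
           2 * (fun k => chainE p (g k)) k
            = (fun k => chainE p (g k)) (k - 1) + (fun k => chainE p (g k)) (k - 1) ∧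
           2 * (fun k => chainE p (g k)) k
            = (fun k => chainE p (g k)) (k + 1) + (fun k => chainE p (g k)) (k + 1) ∧
           2 * (fun k => chainE p (g k)) (k + 1)
            = (fun k => chainE p (g k)) k + (fun k => chainE p (g k)) k := by
    intro p g
    exact (hiff (fun k => chainE p (g k)) (fun k => chainE p (g k))).mpr
      ⟨fun _ => rfl, fun j k => by rw [chainE_parity, chainE_parity]⟩
  let F : (ZMod 2 × (ZMod (2 * b - 1) → ZMod 2)) → T :=
    fun pg => ⟨((fun k => chainE pg.1 (pg.2 k)), (fun k => chainE pg.1 (pg.2 k))),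
      memF pg.1 pg.2⟩
  have hbij : Function.Bijective F := by
    constructor
    · rintro ⟨p, g⟩ ⟨p', g'⟩ hEq
      have hfun : (fun k => chainE p (g k)) = (fun k => chainE p' (g' k)) :=
        congrArg (fun t : T => t.1.1) hEq
      have hpt : ∀ k, chainE p (g k) = chainE p' (g' k) := fun k => congrFun hfun k
      have hp : p = p' := (chainE_inj _ _ _ _ (hpt 0)).1
      have hg : g = g' := funext fun k => (chainE_inj _ _ _ _ (hpt k)).2
      simp [hp, hg]
    · rintro ⟨⟨x, y⟩, hsol⟩
      obtain ⟨hxy, hpar⟩ := (hiff x y).mp hsol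
      refine ⟨(((x 0).val : ZMod 2), fun k => (((x k).val / 2 : ℕ) : ZMod 2)), ?_⟩
      have hxk : ∀ k, chainE ((x 0).val : ZMod 2) (((x k).val / 2 : ℕ) : ZMod 2) = x k :=
        fun k => chainE_surj (x k) (x 0) (hpar k 0)
      apply Subtype.ext
      refine Prod.ext ?_ ?_
      · exact funext fun k => hxk k
      · exact funext fun k => (hxk k).trans (hxy k)
  have hcard := Nat.card_eq_of_bijective F hbij
  rw [← hcard]
  have : Nat.card (ZMod 2 × (ZMod (2 * b - 1) → ZMod 2)) = 2 * 2 ^ (2 * b - 1) := by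
    rw [Nat.card_eq_fintype_card, Fintype.card_prod, Fintype.card_fun, ZMod.card, ZMod.card]
  rw [this]
  have h5 : (2 * b - 1) + 1 = 2 * b := by omega
  calc 2 * 2 ^ (2 * b - 1) = 2 ^ ((2 * b - 1) + 1) := (pow_succ' 2 _).symm
    _ = 2 ^ (2 * b) := by rw [h5]
    _ = 4 ^ b := by rw [pow_mul]; norm_num
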